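/- arXiv:1510.02833 — 2 statements merged into one kernel-verified Lean document; each statement's English description precedes it below -/
import Mathlib

section
/- Let K : X × X → ℝ be a positive definite kernel. Then the nested transformed kernels converge pointwise: lim_{n→∞} K_T^{(n)}(x,y) = 0 if x ≠ y and 2K(x,y) < K(x,x)+K(y,y), and K_T^{(n)}(x,y) = 1 for all n ≥ 1 whenever x = y. -/
open Filter Topology

/-- The normalizing transformation `K_T(x,y) = K(x,y)/(K(x,x)+K(y,y)-K(x,y))`
(defined to be `1` when the denominator vanishes). -/
noncomputable def ktrans {X : Type*} (K : X → X → ℝ) : X → X → ℝ := fun x y =>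
  if K x x + K y y - K x y = 0 then 1 else K x y / (K x x + K y y - K x y)

lemma ktrans_diag {X : Type*} (K : X → X → ℝ) (x : X) : ktrans K x x = 1 := by
  unfold ktrans
  by_cases h : K x x = 0
  · simp [h]
  · simp only [show K x x + K x x - K x x = K x x by ring, h, if_false, div_self h]

/-- For a positive definite kernel `K`, the nested transforms converge pointwise:
`K_T^{(n)}(x,y) → 0` when `x ≠ y` and `2K(x,y) < K(x,x)+K(y,y)`, and
`K_T^{(n)}(x,x) = 1` for all `n ≥ 1`. -/
theorem ktrans_iterate_limit {X : Type*} (K : X → X → ℝ)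
    (hsymm : ∀ x y, K x y = K y x)
    (hpd : ∀ (n : ℕ) (x : Fin n → X) (c : Fin n → ℝ),
      0 ≤ ∑ i, ∑ j, c i * c j * K (x i) (x j)) :
    (∀ x y : X, x ≠ y → 2 * K x y < K x x + K y y →
      Tendsto (fun n => (ktrans^[n] K) x y) atTop (𝓝 0)) ∧
    (∀ (x : X) (n : ℕ), 1 ≤ n → (ktrans^[n] K) x x = 1) := by
  have hdiag : ∀ (x : X) (n : ℕ), 1 ≤ n → (ktrans^[n] K) x x = 1 := by
    intro x n hn
    obtain ⟨m, rfl⟩ : ∃ m, n = m + 1 := ⟨n - 1, by omega⟩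
    rw [Function.iterate_succ_apply']
    exact ktrans_diag _ x
  refine ⟨?_, hdiag⟩
  intro x y hxy hlt
  have hxx : 0 ≤ K x x := by
    have := hpd 1 ![x] ![1]
    simpa using this
  have hyy : 0 ≤ K y y := by
    have := hpd 1 ![y] ![1]
    simpa using this
  have hsum : 0 ≤ K x x + 2 * K x y + K y y := by
    have := hpd 2 ![x, y] ![1, 1]
    simp [Fin.sum_univ_two] at this
    nlinarith [hsymm x y]
  have hD : 0 < K x x + K y y - K x y := by linarith
  set a : ℝ := K x y / (K x x + K y y - K x y) with ha_def
  have ha1 : a < 1 := by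
    rw [ha_def, div_lt_one hD]; linarith
  have ha2 : -(1/3) ≤ a := by
    rw [ha_def, le_div_iff₀ hD]; nlinarith
  have hkey : ∀ n : ℕ, (ktrans^[n+1] K) x y = a / (2 ^ n * (1 - a) + a) := by
    intro n
    induction n with
    | zero =>
      simp only [pow_zero, Function.iterate_one, one_mul]
      rw [show (1 : ℝ) - a + a = 1 by ring, div_one]
      simp [ktrans, hD.ne', ha_def]
    | succ n ih =>
      have h2n : (1:ℝ) ≤ 2 ^ n := one_le_pow₀ (by norm_num)
      have hd1 : (1:ℝ) ≤ 2 ^ n * (1 - a) + a := by nlinarith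
      have hd0 : (0:ℝ) < 2 ^ n * (1 - a) + a := by linarith
      have han : a / (2 ^ n * (1 - a) + a) < 1 := by
        rw [div_lt_one hd0]; linarith
      rw [Function.iterate_succ_apply', ktrans, ih, hdiag x (n+1) (by omega),
        hdiag y (n+1) (by omega)]
      have hne : (1:ℝ) + 1 - a / (2 ^ n * (1 - a) + a) ≠ 0 := by linarith
      rw [if_neg hne]
      rw [pow_succ]
      field_simp
      ring
  have hden : Tendsto (fun n : ℕ => 2 ^ n * (1 - a) + a) atTop atTop := by
    apply Filter.tendsto_atTop_add_const_right
    exact Tendsto.atTop_mul_const (by linarith)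
      (tendsto_pow_atTop_atTop_of_one_lt (by norm_num))
  have hlim : Tendsto (fun n : ℕ => (ktrans^[n+1] K) x y) atTop (𝓝 0) := by
    have := Tendsto.div_atTop (tendsto_const_nhds (x := a)) hden
    simpa [hkey] using this
  exact (tendsto_add_atTop_iff_nat 1).mp hlim
end

section
/- The Jaccard distance J_D(A,B) = 1 - |A ∩ B|/|A ∪ B| (with J_D(∅,∅) = 0) is conditionally negative definite on the family of finite subsets of a set X: for finite families of sets A_1,...,A_n and reals c_1,...,c_n with ∑ c_i = 0, ∑_{i,j} c_i c_j J_D(A_i,A_j) ≤ 0. -/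
/-- The Jaccard distance on finite subsets, with `J_D(∅,∅) = 0`. -/
noncomputable def jaccardDist {X : Type*} [DecidableEq X] (A B : Finset X) : ℝ :=
  if A ∪ B = ∅ then 0 else 1 - ((A ∩ B).card : ℝ) / ((A ∪ B).card : ℝ)

/-!
MinHash. Rank the points of a finite ground set by a uniformly random bijection `σ` onto a
linear order and hash a set to its least rank. The least-ranked point of `A ∪ B` is uniformly
distributed, and the hashes of `A` and `B` agree exactly when it lies in `A ∩ B`, so they agree
with probability `J(A, B)`. Hence `J` is an average of kernels `(A, B) ↦ [h A = h B]`, each of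
which is positive semidefinite, and `J_D = 1 - J` is conditionally negative definite because
the constant kernel vanishes on coefficients summing to zero.
-/

open Finset

theorem sum_sum_mul_ite_eq_nonneg {ι β : Type*} [DecidableEq β] (s : Finset ι) (f : ι → β)
    (c : ι → ℝ) : 0 ≤ ∑ i ∈ s, ∑ j ∈ s, c i * c j * if f i = f j then 1 else 0 := by
  have hsq : ∑ i ∈ s, ∑ j ∈ s, c i * c j * (if f i = f j then 1 else 0) =
      ∑ b ∈ s.image f, (∑ i ∈ s with f i = b, c i) ^ 2 := by
    simp_rw [sq, sum_mul_sum, mul_ite, mul_one, mul_zero, ← sum_filter]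
    rw [← sum_fiberwise_of_maps_to (fun i hi => mem_image_of_mem f hi)]
    refine sum_congr rfl fun b _ => sum_congr rfl fun i hi => ?_
    simp_rw [(mem_filter.mp hi).2, eq_comm]
  exact hsq ▸ sum_nonneg fun b _ => sq_nonneg _

section MinHash

variable {α β : Type*} [LinearOrder β]

def minHash (σ : α ≃ β) (S : Finset α) : WithTop β := (S.image σ).min

theorem minHash_eq_of_forall_le {σ : α ≃ β} {S : Finset α} {a : α} (ha : a ∈ S)
    (hmin : ∀ x ∈ S, σ a ≤ σ x) : minHash σ S = σ a :=
  le_antisymm (min_le (mem_image_of_mem σ ha))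
    (Finset.le_min fun _ hy => by
      obtain ⟨x, hx, rfl⟩ := mem_image.mp hy
      exact WithTop.coe_le_coe.mpr (hmin x hx))

theorem minHash_union [DecidableEq α] (σ : α ≃ β) (A B : Finset α) :
    minHash σ (A ∪ B) = min (minHash σ A) (minHash σ B) := by
  rw [minHash, image_union, min_union]; rfl

theorem mem_of_minHash_eq {σ : α ≃ β} {S : Finset α} {a : α} (h : minHash σ S = σ a) : a ∈ S := by
  obtain ⟨x, hx, hxa⟩ := mem_image.mp (mem_of_min h)
  exact σ.injective hxa ▸ hx

variable [DecidableEq α] [Fintype α] [Fintype β]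

variable (β) in
def minFiber (S : Finset α) (a : α) : Finset (α ≃ β) :=
  univ.filter fun σ => ∀ x ∈ S, σ a ≤ σ x

theorem mem_minFiber {S : Finset α} {a : α} {σ : α ≃ β} :
    σ ∈ minFiber β S a ↔ ∀ x ∈ S, σ a ≤ σ x := by
  simp [minFiber]

theorem minHash_eq_minHash_iff {A B : Finset α} (hAB : (A ∪ B).Nonempty) (σ : α ≃ β) :
    minHash σ A = minHash σ B ↔ ∃ a ∈ A ∩ B, σ ∈ minFiber β (A ∪ B) a := by
  simp only [mem_minFiber]
  constructor
  · intro h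
    obtain ⟨a, ha, hmin⟩ := (A ∪ B).exists_min_image σ hAB
    have hunion := minHash_eq_of_forall_le ha hmin
    rw [minHash_union, ← h, min_self] at hunion
    exact ⟨a, mem_inter.mpr ⟨mem_of_minHash_eq hunion, mem_of_minHash_eq (h ▸ hunion)⟩, hmin⟩
  · rintro ⟨a, ha, hmin⟩
    obtain ⟨haA, haB⟩ := mem_inter.mp ha
    rw [minHash_eq_of_forall_le haA fun x hx => hmin x (mem_union_left B hx),
      minHash_eq_of_forall_le haB fun x hx => hmin x (mem_union_right A hx)]

theorem pairwiseDisjoint_minFiber (S : Finset α) :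
    (S : Set α).PairwiseDisjoint (minFiber β S) := by
  intro a ha b hb hab
  refine disjoint_left.mpr fun σ hσa hσb => hab (σ.injective (le_antisymm ?_ ?_))
  · exact mem_minFiber.mp hσa b hb
  · exact mem_minFiber.mp hσb a ha

theorem biUnion_minFiber {S : Finset α} (hS : S.Nonempty) :
    S.biUnion (minFiber β S) = univ := by
  refine eq_univ_of_forall fun σ => mem_biUnion.mpr ?_
  obtain ⟨a, ha, hmin⟩ := S.exists_min_image σ hS
  exact ⟨a, ha, mem_minFiber.mpr hmin⟩

/-- Precomposing with the transposition `(a b)` moves the `σ`-minimum of `S` from `a` to `b`. -/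
theorem card_minFiber_eq {S : Finset α} {a b : α} (ha : a ∈ S) (hb : b ∈ S) :
    #(minFiber β S a) = #(minFiber β S b) := by
  have hswap : ∀ {a b : α}, a ∈ S → b ∈ S → ∀ σ ∈ minFiber β S a,
      (Equiv.swap a b).trans σ ∈ minFiber β S b := by
    intro a b ha hb σ hσ
    refine mem_minFiber.mpr fun x hx => ?_
    simpa using mem_minFiber.mp hσ _ (by rw [Equiv.swap_apply_def]; split_ifs <;> assumption)
  refine card_nbij' (fun σ : α ≃ β => (Equiv.swap a b).trans σ)
    (fun σ : α ≃ β => (Equiv.swap b a).trans σ)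
    (fun σ hσ => hswap ha hb σ hσ) (fun σ hσ => hswap hb ha σ hσ) ?_ ?_ <;>
  · intro σ _
    ext x
    simp [Equiv.swap_comm]

theorem card_minHash_eq_mul_card_union {A B : Finset α} (hAB : (A ∪ B).Nonempty) :
    #{σ : α ≃ β | minHash σ A = minHash σ B} * #(A ∪ B) =
      #(A ∩ B) * Fintype.card (α ≃ β) := by
  have hfilter : ({σ : α ≃ β | minHash σ A = minHash σ B} : Finset (α ≃ β)) =
      (A ∩ B).biUnion (minFiber β (A ∪ B)) := by
    ext σ
    simp [minHash_eq_minHash_iff hAB]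
  obtain ⟨a, ha⟩ := hAB
  have hconst : ∀ b ∈ A ∪ B, #(minFiber β (A ∪ B) b) = #(minFiber β (A ∪ B) a) :=
    fun b hb => card_minFiber_eq hb ha
  rw [hfilter, ← card_univ, ← biUnion_minFiber ⟨a, ha⟩,
    card_biUnion ((pairwiseDisjoint_minFiber _).subset (coe_subset.mpr inter_subset_union)),
    card_biUnion (pairwiseDisjoint_minFiber _),
    sum_congr rfl fun b hb => hconst b (inter_subset_union hb), sum_congr rfl hconst,
    sum_const, sum_const, smul_eq_mul, smul_eq_mul, mul_right_comm, mul_assoc]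

end MinHash

noncomputable def jaccardIndex {X : Type*} [DecidableEq X] (A B : Finset X) : ℝ :=
  if A ∪ B = ∅ then 1 else (#(A ∩ B) : ℝ) / #(A ∪ B)

theorem jaccardIndex_mul_card_equiv {α β : Type*} [DecidableEq α] [Fintype α] [Fintype β]
    [LinearOrder β] (A B : Finset α) :
    jaccardIndex A B * Fintype.card (α ≃ β) = #{σ : α ≃ β | minHash σ A = minHash σ B} := by
  rw [jaccardIndex]
  split_ifs with hAB
  · obtain ⟨rfl, rfl⟩ := union_eq_empty.mp hAB
    simp
  · have hcard := card_minHash_eq_mul_card_union (β := β) (nonempty_iff_ne_empty.mpr hAB)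
    have hpos : (0 : ℝ) < #(A ∪ B) := by simpa [card_pos] using nonempty_iff_ne_empty.mpr hAB
    rw [div_mul_eq_mul_div, div_eq_iff hpos.ne']
    exact_mod_cast hcard.symm

theorem jaccardIndex_map {X Y : Type*} [DecidableEq X] [DecidableEq Y] (f : X ↪ Y)
    (A B : Finset X) : jaccardIndex (A.map f) (B.map f) = jaccardIndex A B := by
  simp [jaccardIndex, ← map_union, ← map_inter]

theorem sum_sum_mul_jaccardIndex_nonneg_of_fintype {α ι : Type*} [DecidableEq α] [Fintype α]
    [Fintype ι] (A : ι → Finset α) (c : ι → ℝ) :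
    0 ≤ ∑ i, ∑ j, c i * c j * jaccardIndex (A i) (A j) := by
  let β := Fin (Fintype.card α)
  have hpos : (0 : ℝ) < Fintype.card (α ≃ β) := by
    have : Nonempty (α ≃ β) := ⟨Fintype.equivFin α⟩
    exact_mod_cast Fintype.card_pos
  refine nonneg_of_mul_nonneg_left ?_ hpos
  calc 0 ≤ ∑ σ : α ≃ β, ∑ i, ∑ j, c i * c j *
          if minHash σ (A i) = minHash σ (A j) then 1 else 0 :=
        sum_nonneg fun σ _ => sum_sum_mul_ite_eq_nonneg _ _ c
    _ = (∑ i, ∑ j, c i * c j * jaccardIndex (A i) (A j)) * Fintype.card (α ≃ β) := by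
        simp_rw [sum_mul, mul_assoc, jaccardIndex_mul_card_equiv, natCast_card_filter, mul_sum]
        rw [sum_comm]
        exact sum_congr rfl fun i _ => sum_comm

theorem sum_sum_mul_jaccardIndex_nonneg {X ι : Type*} [DecidableEq X] [Fintype ι]
    (A : ι → Finset X) (c : ι → ℝ) : 0 ≤ ∑ i, ∑ j, c i * c j * jaccardIndex (A i) (A j) := by
  let U := univ.biUnion A
  have hA : ∀ i, ((A i).subtype (· ∈ U)).map (Function.Embedding.subtype _) = A i :=
    fun i => subtype_map_of_mem fun x hx => mem_biUnion.mpr ⟨i, mem_univ i, hx⟩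
  convert sum_sum_mul_jaccardIndex_nonneg_of_fintype (fun i => (A i).subtype (· ∈ U)) c
    using 4 with i _ j _
  rw [← jaccardIndex_map (Function.Embedding.subtype _), hA, hA]

theorem jaccardDist_eq_one_sub_jaccardIndex {X : Type*} [DecidableEq X] (A B : Finset X) :
    jaccardDist A B = 1 - jaccardIndex A B := by
  unfold jaccardDist jaccardIndex
  split_ifs <;> ring

/-- The Jaccard distance is conditionally negative definite on finite subsets. -/
theorem jaccardDist_cnd {X : Type*} [DecidableEq X] (n : ℕ)
    (A : Fin n → Finset X) (c : Fin n → ℝ) (hc : ∑ i, c i = 0) :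
    ∑ i, ∑ j, c i * c j * jaccardDist (A i) (A j) ≤ 0 := by
  calc ∑ i, ∑ j, c i * c j * jaccardDist (A i) (A j)
      = (∑ i, c i) * (∑ j, c j) - ∑ i, ∑ j, c i * c j * jaccardIndex (A i) (A j) := by
        simp_rw [jaccardDist_eq_one_sub_jaccardIndex, mul_sub, mul_one, sum_sub_distrib,
          sum_mul_sum]
    _ ≤ 0 := by
        rw [hc, zero_mul, zero_sub, neg_nonpos]
        exact sum_sum_mul_jaccardIndex_nonneg A c
end
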